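/- arXiv:1409.5992 — 4 statements merged into one kernel-verified Lean document; each statement's English description precedes it below -/
import Mathlib

section
/- Assume that for every n ≥ 2, every Besicovitch set in ℝⁿ has Hausdorff dimension at least n − 1. Then every Besicovitch set in ℝⁿ has packing dimension (and upper Minkowski dimension) equal to n. -/
/-!
Cover `B ⊆ ⋃ i, E i` by bounded sets with `ubDim (E i) ≤ r`. For every `m`, the power
`Bᵐ ⊆ (ℝⁿ)ᵐ` is covered by the countably many products `E i₁ × ⋯ × E iₘ`; the `ε`-neighbourhood
of such a product has volume at most `ε ^ a` for every `a < m (n - r)`, and a Vitali covering by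
balls of radius `4ε` turns this volume decay into `dimH ≤ m r`. On the other hand `Bᵐ` is
linearly equivalent to a Besicovitch set in `ℝ^(m n)`, so `m n - 1 ≤ dimH Bᵐ ≤ m r`, and letting
`m → ∞` gives `n ≤ r`. Hence `n ≤ pdim B ≤ ubDim B ≤ n`.
-/

open Set Filter MeasureTheory

/-- A Besicovitch set in ℝᵏ: a compact set containing a unit line segment
in every direction. -/
def IsBesicovitch {k : ℕ} (K : Set (EuclideanSpace ℝ (Fin k))) : Prop :=
  IsCompact K ∧ ∀ e : EuclideanSpace ℝ (Fin k), ‖e‖ = 1 →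
    ∃ x, ∀ t ∈ Icc (0 : ℝ) 1, x + t • e ∈ K

/-- Upper Minkowski (box-counting) dimension of a subset of ℝᵏ, via the volume of
`ε`-neighbourhoods: `ubDim A = k - liminf_{ε → 0⁺} log vol(A_ε) / log ε`. -/
noncomputable def ubDim {k : ℕ} (A : Set (EuclideanSpace ℝ (Fin k))) : ℝ :=
  k - liminf (fun ε : ℝ =>
    Real.log ((volume (Metric.thickening ε A)).toReal) / Real.log ε) (nhdsWithin 0 (Ioi 0))

/-- Packing dimension of a subset of ℝᵏ, defined from the upper Minkowski dimension by
countable decompositions. -/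
noncomputable def pdim {k : ℕ} (A : Set (EuclideanSpace ℝ (Fin k))) : ℝ :=
  sInf {r : ℝ | ∃ E : ℕ → Set (EuclideanSpace ℝ (Fin k)),
    A ⊆ ⋃ i, E i ∧ ∀ i, Bornology.IsBounded (E i) ∧ ubDim (E i) ≤ r}

open Metric Bornology Topology Module
open scoped ENNReal NNReal

theorem Metric.ediam_ball_le {X : Type*} [PseudoMetricSpace X] (x : X) (r : ℝ) :
    ediam (ball x r) ≤ ENNReal.ofReal (2 * r) := by
  rw [← eball_ofReal, ENNReal.ofReal_mul zero_le_two, ENNReal.ofReal_ofNat]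
  exact ediam_eball_le

section Haar

variable {E : Type*} [NormedAddCommGroup E] [NormedSpace ℝ E] [FiniteDimensional ℝ E]
  [MeasurableSpace E] [BorelSpace E] (μ : Measure E) [μ.IsAddHaarMeasure]

theorem exists_countable_ball_cover_encard_mul_le (A : Set E) {ε : ℝ} (hε : 0 < ε) :
    ∃ u : Set E, u.Countable ∧ A ⊆ ⋃ x ∈ u, ball x (4 * ε) ∧
      u.encard * μ (ball 0 ε) ≤ μ (thickening ε A) := by
  obtain ⟨u, huA, hdisj, hcov⟩ := Vitali.exists_disjoint_subfamily_covering_enlargement_ball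
    A id (fun _ => ε) ε (fun _ _ => le_rfl) 4 (by norm_num)
  have hu : u.Countable :=
    hdisj.countable_of_isOpen (fun _ _ => isOpen_ball) fun _ _ => nonempty_ball.2 hε
  refine ⟨u, hu, fun x hx => ?_, ?_⟩
  · obtain ⟨b, hb, hsub⟩ := hcov x hx
    exact mem_biUnion hb (hsub (mem_ball_self hε))
  · calc u.encard * μ (ball 0 ε) = ∑' x : u, μ (ball (x : E) ε) := by
          simp only [Measure.addHaar_ball_center, ENNReal.tsum_set_const]
      _ = μ (⋃ x ∈ u, ball x ε) :=
          (measure_biUnion hu hdisj fun _ _ => measurableSet_ball).symm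
      _ ≤ μ (thickening ε A) :=
          measure_mono (iUnion₂_subset fun x hx => ball_subset_thickening (huA hx) ε)

theorem exists_countable_ball_cover_tsum_ediam_rpow_le {A : Set E} {ε a : ℝ} (hε : 0 < ε)
    (hA : μ (thickening ε A) ≤ ENNReal.ofReal (ε ^ a)) (d : ℝ≥0) :
    ∃ u : Set E, u.Countable ∧ A ⊆ ⋃ x ∈ u, ball x (4 * ε) ∧
      ∑' x : u, ediam (ball (x : E) (4 * ε)) ^ (d : ℝ) ≤
        ENNReal.ofReal (8 ^ (d : ℝ) / (μ (ball 0 1)).toReal * ε ^ (a + d - finrank ℝ E)) := by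
  obtain ⟨u, hu, hcov, hcard⟩ := exists_countable_ball_cover_encard_mul_le μ A hε
  refine ⟨u, hu, hcov, ?_⟩
  have hc : 0 < (μ (ball 0 1)).toReal :=
    ENNReal.toReal_pos (measure_ball_pos μ 0 one_pos).ne' measure_ball_lt_top.ne
  have hcount : (u.encard : ℝ≥0∞) ≤
      ENNReal.ofReal (ε ^ (a - finrank ℝ E) / (μ (ball 0 1)).toReal) := by
    replace hcard := hcard.trans hA
    rw [Measure.addHaar_ball_of_pos μ 0 hε, ← ENNReal.ofReal_toReal measure_ball_lt_top.ne,
      ← ENNReal.ofReal_mul (by positivity),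
      ← ENNReal.le_div_iff_mul_le (.inl (by simp; positivity)) (.inl ENNReal.ofReal_ne_top),
      ← ENNReal.ofReal_div_of_pos (by positivity)] at hcard
    convert hcard using 2
    rw [Real.rpow_sub hε, Real.rpow_natCast, div_div]
  calc ∑' x : u, ediam (ball (x : E) (4 * ε)) ^ (d : ℝ)
      ≤ ∑' _ : u, ENNReal.ofReal (8 * ε) ^ (d : ℝ) :=
        ENNReal.tsum_le_tsum fun x => ENNReal.rpow_le_rpow
          ((ediam_ball_le _ _).trans_eq (by ring_nf)) d.2
    _ = u.encard * ENNReal.ofReal ((8 * ε) ^ (d : ℝ)) := by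
        rw [ENNReal.tsum_set_const, ENNReal.ofReal_rpow_of_pos (by positivity)]
    _ ≤ ENNReal.ofReal
          (ε ^ (a - finrank ℝ E) / (μ (ball 0 1)).toReal * (8 * ε) ^ (d : ℝ)) := by
        rw [ENNReal.ofReal_mul (by positivity)]
        gcongr
    _ = _ := by
        rw [Real.mul_rpow (by norm_num) hε.le,
          show a + d - finrank ℝ E = a - finrank ℝ E + d by ring, Real.rpow_add hε]
        ring_nf

theorem hausdorffMeasure_eq_zero_of_volume_thickening_le {A : Set E} {a : ℝ} {d : ℝ≥0}
    (hd : finrank ℝ E < a + d)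
    (hA : ∀ᶠ ε in 𝓝[>] 0, μ (thickening ε A) ≤ ENNReal.ofReal (ε ^ a)) :
    μH[d] A = 0 := by
  set g : ℝ → ℝ := fun ε =>
    8 ^ (d : ℝ) / (μ (ball 0 1)).toReal * ε ^ (a + d - finrank ℝ E)
  have hg : Tendsto g (𝓝[>] 0) (𝓝 0) := by
    have hpos : 0 < a + d - finrank ℝ E := by linarith
    simpa [g, Real.zero_rpow hpos.ne'] using
      (((Real.continuousAt_rpow_const 0 _ (.inr hpos.le)).tendsto).const_mul _).mono_left
        nhdsWithin_le_nhds
  -- `∅` is a dummy cover where none is needed; it keeps every index type countable.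
  have hcover : ∀ ε, ∃ u : Set E, u.Countable ∧ (ε ∈ Ioi 0 → μ (thickening ε A) ≤
      ENNReal.ofReal (ε ^ a) → A ⊆ ⋃ x ∈ u, ball x (4 * ε) ∧
        ∑' x : u, ediam (ball (x : E) (4 * ε)) ^ (d : ℝ) ≤ ENNReal.ofReal (g ε)) := by
    intro ε
    by_cases hε : 0 < ε ∧ μ (thickening ε A) ≤ ENNReal.ofReal (ε ^ a)
    · obtain ⟨u, hu, hcov, hsum⟩ :=
        exists_countable_ball_cover_tsum_ediam_rpow_le μ hε.1 hε.2 d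
      exact ⟨u, hu, fun _ _ => ⟨hcov, hsum⟩⟩
    · exact ⟨∅, countable_empty, fun h₁ h₂ => absurd ⟨h₁, h₂⟩ hε⟩
  choose u hu hcov using hcover
  have := fun ε => (hu ε).to_subtype
  have hr : Tendsto (fun ε => ENNReal.ofReal (2 * (4 * ε))) (𝓝[>] 0) (𝓝 0) := by
    rw [← ENNReal.ofReal_zero]
    exact ENNReal.tendsto_ofReal (((by fun_prop : Continuous fun ε : ℝ => 2 * (4 * ε)).tendsto'
      0 0 (by ring)).mono_left nhdsWithin_le_nhds)
  have hμ := Measure.hausdorffMeasure_le_liminf_tsum d A _ hr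
    (fun ε (x : u ε) => ball (x : E) (4 * ε)) (.of_forall fun ε x => ediam_ball_le _ _)
    (by
      filter_upwards [eventually_mem_nhdsWithin, hA] with ε hε hεA x hx
      simpa only [mem_iUnion, SetCoe.exists, exists_prop] using (hcov ε hε hεA).1 hx)
  refine le_antisymm (hμ.trans ?_) zero_le
  calc _ ≤ liminf (fun ε => ENNReal.ofReal (g ε)) (𝓝[>] 0) :=
        liminf_le_liminf (by
          filter_upwards [eventually_mem_nhdsWithin, hA] with ε hε hεA using
            (hcov ε hε hεA).2)
    _ = 0 := by simpa using (ENNReal.tendsto_ofReal hg).liminf_eq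

theorem dimH_le_of_volume_thickening_le {A : Set E} {s : ℝ}
    (hA : ∀ a < s, ∀ᶠ ε in 𝓝[>] 0, μ (thickening ε A) ≤ ENNReal.ofReal (ε ^ a)) :
    dimH A ≤ ENNReal.ofReal (finrank ℝ E - s) := by
  refine dimH_le fun d hd => le_of_not_gt fun hlt => ?_
  rw [← ENNReal.ofReal_coe_nnreal, ENNReal.ofReal_lt_ofReal_iff'] at hlt
  obtain ⟨a, hda, has⟩ :=
    exists_between (show finrank ℝ E - (d : ℝ) < s by linarith [hlt.1])
  rw [hausdorffMeasure_eq_zero_of_volume_thickening_le μ (by linarith) (hA a has)] at hd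
  exact ENNReal.zero_ne_top hd

end Haar

theorem Filter.liminf_nonneg_of_forall_neg {α : Type*} {f : Filter α} {u : α → ℝ}
    (h : ∀ c < 0, ∀ᶠ x in f, c ≤ u x) : 0 ≤ liminf u f := by
  by_cases hu : f.IsCoboundedUnder (· ≥ ·) u
  · exact le_of_forall_lt_imp_le_of_dense fun c hc => le_liminf_of_le hu (h c hc)
  · have : ¬BddAbove {c | ∀ᶠ x in f, c ≤ u x} := hu
    rw [liminf_eq, Real.sSup_of_not_bddAbove this]

section UpperMinkowski

variable {k : ℕ} {A : Set (EuclideanSpace ℝ (Fin k))}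

theorem eventually_le_log_volume_thickening_div_log (hA : IsBounded A) {c : ℝ} (hc : c < 0) :
    ∀ᶠ ε in 𝓝[>] 0, c ≤ Real.log (volume (thickening ε A)).toReal / Real.log ε := by
  have hlog : ∀ᶠ ε in 𝓝[>] (0 : ℝ),
      Real.log (volume (thickening 1 A)).toReal ≤ c * Real.log ε :=
    ((tendsto_const_mul_atTop_of_neg hc).2 Real.tendsto_log_nhdsGT_zero).eventually_ge_atTop _
  filter_upwards [Ioo_mem_nhdsGT one_pos, hlog] with ε hε hεlog
  rw [le_div_iff_of_neg (Real.log_neg hε.1 hε.2)]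
  rcases ENNReal.toReal_nonneg.eq_or_lt with hzero | hpos
  · rw [← hzero, Real.log_zero]
    exact (mul_pos_of_neg_of_neg hc (Real.log_neg hε.1 hε.2)).le
  · refine (Real.log_le_log hpos ?_).trans hεlog
    exact ENNReal.toReal_mono hA.thickening.measure_lt_top.ne
      (measure_mono (thickening_mono hε.2.le A))

theorem ubDim_le (hA : IsBounded A) : ubDim A ≤ k := by
  have := liminf_nonneg_of_forall_neg fun _ hc =>
    eventually_le_log_volume_thickening_div_log hA hc
  rw [ubDim]
  linarith

theorem eventually_volume_thickening_le_rpow (hA : IsBounded A) {a : ℝ} (ha : a < k - ubDim A) :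
    ∀ᶠ ε in 𝓝[>] 0, volume (thickening ε A) ≤ ENNReal.ofReal (ε ^ a) := by
  rw [ubDim, sub_sub_cancel] at ha
  filter_upwards [eventually_lt_of_lt_liminf ha
    ⟨-1, eventually_le_log_volume_thickening_div_log hA (by norm_num)⟩,
    Ioo_mem_nhdsGT one_pos] with ε hlt hε
  rw [lt_div_iff_of_neg (Real.log_neg hε.1 hε.2)] at hlt
  rw [← ENNReal.ofReal_toReal hA.thickening.measure_lt_top.ne]
  refine ENNReal.ofReal_le_ofReal ?_
  rcases ENNReal.toReal_nonneg.eq_or_lt with hzero | hpos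
  · exact hzero ▸ Real.rpow_nonneg hε.1.le a
  · rw [← Real.log_le_log_iff hpos (Real.rpow_pos_of_pos hε.1 a), Real.log_rpow hε.1]
    linarith

end UpperMinkowski

section Pi

variable {ι : Type*} [Fintype ι] {π : ι → Type*} [∀ i, PseudoMetricSpace (π i)]

theorem thickening_univ_pi_subset (T : ∀ i, Set (π i)) (ε : ℝ) :
    thickening ε (univ.pi T) ⊆ univ.pi fun i => thickening ε (T i) := by
  intro x hx i _
  obtain ⟨y, hy, hxy⟩ := mem_thickening_iff.1 hx
  exact mem_thickening_iff.2 ⟨y i, hy i (mem_univ i), (dist_le_pi_dist x y i).trans_lt hxy⟩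

variable [∀ i, MeasureSpace (π i)] [∀ i, SigmaFinite (volume : Measure (π i))]

theorem eventually_volume_thickening_univ_pi_le {T : ∀ i, Set (π i)} {a : ι → ℝ}
    (h : ∀ i, ∀ᶠ ε in 𝓝[>] 0,
      volume (thickening ε (T i)) ≤ ENNReal.ofReal (ε ^ a i)) :
    ∀ᶠ ε in 𝓝[>] 0,
      volume (thickening ε (univ.pi T)) ≤ ENNReal.ofReal (ε ^ ∑ i, a i) := by
  filter_upwards [eventually_all.2 h, eventually_mem_nhdsWithin] with ε hε (hε₀ : 0 < ε)
  calc volume (thickening ε (univ.pi T))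
      ≤ ∏ i, volume (thickening ε (T i)) :=
        (measure_mono (thickening_univ_pi_subset T ε)).trans_eq (volume_pi_pi _)
    _ ≤ ∏ i, ENNReal.ofReal (ε ^ a i) := Finset.prod_le_prod' fun i _ => hε i
    _ = ENNReal.ofReal (ε ^ ∑ i, a i) := by
        rw [Real.rpow_sum_of_pos hε₀, ENNReal.ofReal_prod_of_nonneg fun i _ => by positivity]

end Pi

theorem dimH_univ_pi_le_of_subset_iUnion {n m : ℕ} (hm : 0 < m)
    {B : Set (EuclideanSpace ℝ (Fin n))} {E : ℕ → Set (EuclideanSpace ℝ (Fin n))} {r : ℝ}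
    (hBE : B ⊆ ⋃ i, E i)
    (hE : ∀ i, IsBounded (E i) ∧ ubDim (E i) ≤ r) :
    dimH (univ.pi fun _ : Fin m => B) ≤ ENNReal.ofReal (m * r) := by
  have hsub : univ.pi (fun _ : Fin m => B) ⊆ ⋃ f : Fin m → ℕ, univ.pi fun j => E (f j) :=
    iUnion_univ_pi (fun _ => E) ▸ pi_mono fun _ _ => hBE
  refine (dimH_mono hsub).trans ?_
  rw [dimH_iUnion]
  refine iSup_le fun f => ?_
  have hm' : (0 : ℝ) < m := Nat.cast_pos.2 hm
  have hdim := dimH_le_of_volume_thickening_le volume (A := univ.pi fun j => E (f j))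
    (s := m * (n - r)) fun a ha => ?_
  · refine hdim.trans_eq (congrArg ENNReal.ofReal ?_)
    have hrank : finrank ℝ (Fin m → EuclideanSpace ℝ (Fin n)) = m * n := by
      simp only [finrank_pi_fintype, finrank_euclideanSpace_fin, Finset.sum_const,
        Finset.card_univ, Fintype.card_fin, smul_eq_mul]
    rw [hrank]
    push_cast
    ring
  · have hfactor : ∀ j, ∀ᶠ ε in 𝓝[>] 0,
        volume (thickening ε (E (f j))) ≤ ENNReal.ofReal (ε ^ (a / m)) := fun j =>
      eventually_volume_thickening_le_rpow (hE (f j)).1 (by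
        have : a / m < n - r := by rw [div_lt_iff₀ hm']; linarith
        linarith [(hE (f j)).2])
    simpa [Finset.sum_const, mul_div_cancel₀ _ hm'.ne'] using
      eventually_volume_thickening_univ_pi_le hfactor

section Besicovitch

variable {k : ℕ} {B : Set (EuclideanSpace ℝ (Fin k))}

theorem IsBesicovitch.nonempty (hB : IsBesicovitch B) (hk : 0 < k) : B.Nonempty := by
  obtain ⟨x, hx⟩ := hB.2 (EuclideanSpace.single ⟨0, hk⟩ 1) (by simp)
  exact ⟨x, by simpa using hx 0 (left_mem_Icc.2 zero_le_one)⟩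

theorem IsBesicovitch.exists_segment (hB : IsBesicovitch B) (hk : 0 < k)
    {v : EuclideanSpace ℝ (Fin k)} (hv : ‖v‖ ≤ 1) :
    ∃ x, ∀ t ∈ Icc (0 : ℝ) 1, x + t • v ∈ B := by
  rcases eq_or_ne v 0 with rfl | hv₀
  · obtain ⟨x, hx⟩ := hB.nonempty hk
    exact ⟨x, fun t _ => by simpa using hx⟩
  obtain ⟨x, hx⟩ := hB.2 (‖v‖⁻¹ • v) (norm_smul_inv_norm hv₀)
  refine ⟨x, fun t ht => ?_⟩
  have := hx (t * ‖v‖) ⟨mul_nonneg ht.1 (norm_nonneg _), mul_le_one₀ ht.2 (norm_nonneg _) hv⟩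
  rwa [mul_smul, smul_inv_smul₀ (norm_ne_zero_iff.2 hv₀)] at this

theorem IsBesicovitch.exists_segment_univ_pi (hB : IsBesicovitch B) (hk : 0 < k) {ι : Type*}
    [Fintype ι] {e : ι → EuclideanSpace ℝ (Fin k)} (he : ‖e‖ ≤ 1) :
    ∃ x, ∀ t ∈ Icc (0 : ℝ) 1, x + t • e ∈ univ.pi fun _ => B := by
  choose x hx using fun i => hB.exists_segment hk ((norm_le_pi_norm e i).trans he)
  exact ⟨x, fun t ht i _ => hx i t ht⟩

end Besicovitch

theorem exists_continuousLinearEquiv_euclideanSpace_pi (m n : ℕ) :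
    ∃ L : EuclideanSpace ℝ (Fin (m * n)) ≃L[ℝ] (Fin m → EuclideanSpace ℝ (Fin n)),
      ∀ x, ‖L x‖ ≤ ‖x‖ := by
  let L₂ := (LinearIsometryEquiv.piLpCongrLeft 2 ℝ ℝ
    (finProdFinEquiv.symm.trans (Equiv.sigmaEquivProd (Fin m) (Fin n)).symm)).trans
    (LinearIsometryEquiv.piLpCurry ℝ 2 fun (_ : Fin m) (_ : Fin n) => ℝ)
  refine ⟨L₂.toContinuousLinearEquiv.trans (PiLp.continuousLinearEquiv 2 ℝ _), fun x => ?_⟩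
  refine (pi_norm_le_iff_of_nonneg (norm_nonneg x)).2 fun j => ?_
  exact (PiLp.norm_apply_le (L₂ x) j).trans_eq (L₂.norm_map x)

theorem IsBesicovitch.exists_dimH_eq_univ_pi {n : ℕ} {B : Set (EuclideanSpace ℝ (Fin n))}
    (hB : IsBesicovitch B) (hn : 0 < n) (m : ℕ) :
    ∃ K : Set (EuclideanSpace ℝ (Fin (m * n))), IsBesicovitch K ∧
      dimH K = dimH (univ.pi fun _ : Fin m => B) := by
  obtain ⟨L, hL⟩ := exists_continuousLinearEquiv_euclideanSpace_pi m n
  refine ⟨L.symm '' univ.pi fun _ => B,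
    ⟨(isCompact_univ_pi fun _ => hB.1).image L.symm.continuous, fun e he => ?_⟩,
    L.symm.dimH_image _⟩
  obtain ⟨x, hx⟩ := hB.exists_segment_univ_pi hn ((hL e).trans he.le)
  exact ⟨L.symm x, fun t ht => ⟨x + t • L e, hx t ht, by simp⟩⟩

theorem IsBesicovitch.natCast_le_of_subset_iUnion
    (h : ∀ k : ℕ, 2 ≤ k → ∀ K : Set (EuclideanSpace ℝ (Fin k)),
      IsBesicovitch K → (k : ℝ≥0∞) - 1 ≤ dimH K)
    {n : ℕ} (hn : 2 ≤ n) {B : Set (EuclideanSpace ℝ (Fin n))} (hB : IsBesicovitch B)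
    {E : ℕ → Set (EuclideanSpace ℝ (Fin n))} {r : ℝ} (hBE : B ⊆ ⋃ i, E i)
    (hE : ∀ i, IsBounded (E i) ∧ ubDim (E i) ≤ r) : (n : ℝ) ≤ r := by
  have hpow : ∀ m : ℕ, 0 < m → (m * n : ℝ) - 1 ≤ m * r := by
    intro m hm
    obtain ⟨K, hK, hdim⟩ := hB.exists_dimH_eq_univ_pi (by omega) m
    have hmn : 2 ≤ m * n := hn.trans (Nat.le_mul_of_pos_left n hm)
    have hle := (h _ hmn K hK).trans
      (hdim.trans_le (dimH_univ_pi_le_of_subset_iUnion hm hBE hE))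
    rw [← ENNReal.ofReal_natCast, ← ENNReal.ofReal_one, ← ENNReal.ofReal_sub _ zero_le_one,
      ENNReal.ofReal_le_ofReal_iff'] at hle
    have : (2 : ℝ) ≤ m * n := by exact_mod_cast hmn
    push_cast at hle
    rcases hle with hle | hle <;> linarith
  refine le_of_forall_pos_lt_add fun δ hδ => ?_
  obtain ⟨m, hm⟩ := exists_nat_gt δ⁻¹
  have hm₀ : (0 : ℝ) < m := (inv_pos.2 hδ).trans hm
  have hmδ : 1 < m * δ := by rwa [inv_lt_iff_one_lt_mul₀ hδ] at hm
  have := hpow m (Nat.cast_pos.1 hm₀)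
  exact lt_of_mul_lt_mul_left (by linarith : (m : ℝ) * n < m * (r + δ)) hm₀.le

theorem le_pdim_and_pdim_le_ubDim {k : ℕ} {A : Set (EuclideanSpace ℝ (Fin k))}
    (hA : IsBounded A) {c : ℝ} (h : ∀ (r : ℝ) (E : ℕ → Set (EuclideanSpace ℝ (Fin k))),
      A ⊆ ⋃ i, E i → (∀ i, IsBounded (E i) ∧ ubDim (E i) ≤ r) → c ≤ r) :
    c ≤ pdim A ∧ pdim A ≤ ubDim A := by
  have hlower : c ∈ lowerBounds {r : ℝ | ∃ E : ℕ → Set (EuclideanSpace ℝ (Fin k)),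
      A ⊆ ⋃ i, E i ∧ ∀ i, IsBounded (E i) ∧ ubDim (E i) ≤ r} :=
    fun r ⟨E, hAE, hE⟩ => h r E hAE hE
  have hmem : ubDim A ∈ {r : ℝ | ∃ E : ℕ → Set (EuclideanSpace ℝ (Fin k)),
      A ⊆ ⋃ i, E i ∧ ∀ i, IsBounded (E i) ∧ ubDim (E i) ≤ r} :=
    ⟨fun _ => A, subset_iUnion (fun _ => A) 0, fun _ => ⟨hA, le_rfl⟩⟩
  exact ⟨le_csInf ⟨_, hmem⟩ hlower, csInf_le ⟨c, hlower⟩ hmem⟩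

/-- If for every `k ≥ 2` every Besicovitch set in ℝᵏ has Hausdorff dimension at least
`k - 1`, then every Besicovitch set in ℝⁿ has packing dimension and upper Minkowski
dimension equal to `n`. -/
theorem besicovitch_pdim_eq_of_dimH_ge
    (h : ∀ k : ℕ, 2 ≤ k → ∀ K : Set (EuclideanSpace ℝ (Fin k)),
      IsBesicovitch K → (k : ENNReal) - 1 ≤ dimH K)
    (n : ℕ) (hn : 2 ≤ n) (B : Set (EuclideanSpace ℝ (Fin n))) (hB : IsBesicovitch B) :
    pdim B = n ∧ ubDim B = n := by
  obtain ⟨h₁, h₂⟩ := le_pdim_and_pdim_le_ubDim hB.1.isBounded fun _ _ hBE hE =>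
    hB.natCast_le_of_subset_iUnion h hn hBE hE
  have h₃ : ubDim B ≤ n := ubDim_le hB.1.isBounded
  exact ⟨by linarith, by linarith⟩
end

section
/- For any collection S of closed line segments in ℝⁿ, each contained in a fixed bounded open set and of length at least a fixed δ > 0, there exists a collection S' ⊇ S of closed line segments such that the union of S' has the same Hausdorff dimension as the union of S, and the set of lines obtained by extending the segments of S' is a Borel subset of the space of lines. -/
open Set

/-- The nonvertical line `l(a,b) = {(t, t•a + b) : t ∈ ℝ}` in `ℝ × ℝ^{n-1} = ℝⁿ`. -/
def lineNV {m : ℕ} (a b : EuclideanSpace ℝ (Fin m)) : Set (ℝ × EuclideanSpace ℝ (Fin m)) :=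
  {z | ∃ t : ℝ, z = (t, t • a + b)}

/-!
Enlarge the union of the segments of `S` to a `G_δ` set `G` of the same Hausdorff dimension and
let `S'` consist of all nonvertical segments contained in `G`. The line `l(a,b)` extends a
segment of `S'` iff `G` contains the graph of `t ↦ t • a + b` over some interval with rational
endpoints. For a fixed compact interval and an open set this is an open condition on `(a,b)`,
so the set of such lines is a countable union of `G_δ` sets.

The `G_δ` hull exists because a `μH[d]`-null set has covers of arbitrarily small mesh and
`d`-dimensional sum whose pieces may be slightly thickened into open sets; intersecting the
resulting `G_δ` null hulls over exponents `d` decreasing to `dimH s` gives the hull.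
-/

open Filter Topology MeasureTheory MeasureTheory.Measure Metric
open scoped ENNReal NNReal

section HausdorffHull

variable {X : Type*} [EMetricSpace X]

lemma exists_isOpen_superset_ediam_rpow_lt {d : ℝ} (hd : 0 < d) {u : Set X} {r η : ℝ≥0∞}
    (hu : ediam u < r) (hη : η ≠ 0) :
    ∃ v, IsOpen v ∧ u ⊆ v ∧ ediam v < r ∧ ediam v ^ d < ediam u ^ d + η := by
  have hfin : ediam u ^ d ≠ ∞ := ENNReal.rpow_ne_top_of_nonneg hd.le hu.ne_top
  have hlim : Tendsto (fun ε : ℝ≥0 => ediam u + 2 * (ε : ℝ≥0∞)) (𝓝 0) (𝓝 (ediam u)) := by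
    have hcont : Continuous fun ε : ℝ≥0 => ediam u + 2 * (ε : ℝ≥0∞) :=
      continuous_const.add ((ENNReal.continuous_const_mul (by norm_num)).comp
        ENNReal.continuous_coe)
    exact hcont.tendsto' 0 _ (by simp)
  have hev : ∀ᶠ ε : ℝ≥0 in 𝓝[>] 0,
      ediam u + 2 * ε < r ∧ (ediam u + 2 * ε) ^ d < ediam u ^ d + η :=
    ((hlim.eventually (gt_mem_nhds hu)).and
      (((ENNReal.continuous_rpow_const.tendsto _).comp hlim).eventually
        (gt_mem_nhds (ENNReal.lt_add_right hfin hη)))).filter_mono nhdsWithin_le_nhds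
  obtain ⟨ε, ⟨hεr, hεη⟩, hε⟩ := (hev.and self_mem_nhdsWithin).exists
  have hdiam := ediam_thickening_le (s := u) ε
  exact ⟨thickening ε u, isOpen_thickening, self_subset_thickening (by exact_mod_cast hε) u,
    hdiam.trans_lt hεr, (ENNReal.rpow_le_rpow hdiam hd.le).trans_lt hεη⟩

lemma exists_isOpen_cover_tsum_ediam_rpow_lt [MeasurableSpace X] [BorelSpace X] {d : ℝ}
    (hd : 0 < d) {s : Set X} (hs : μH[d] s = 0) {r ε : ℝ≥0∞} (hr : 0 < r) (hε : ε ≠ 0) :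
    ∃ v : ℕ → Set X, (∀ n, IsOpen (v n)) ∧ s ⊆ ⋃ n, v n ∧ (∀ n, ediam (v n) < r) ∧
      ∑' n, ediam (v n) ^ d < ε := by
  obtain ⟨ρ, hρ, hρr⟩ := exists_between hr
  have hε2 : ε / 2 ≠ 0 := ENNReal.div_ne_zero.2 ⟨hε, ENNReal.ofNat_ne_top⟩
  have hcover : (⨅ (u : ℕ → Set X) (_ : s ⊆ ⋃ n, u n) (_ : ∀ n, ediam (u n) ≤ ρ),
      ∑' n, ⨆ _ : (u n).Nonempty, ediam (u n) ^ d) < ε / 2 := by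
    refine lt_of_le_of_lt ?_ (pos_iff_ne_zero.2 hε2)
    rw [← hs, hausdorffMeasure_apply]
    exact le_iSup₂_of_le ρ hρ le_rfl
  simp only [iInf_lt_iff] at hcover
  obtain ⟨u, hsu, hu, hsum⟩ := hcover
  have hsum' : ∑' n, ediam (u n) ^ d < ε / 2 := by
    refine lt_of_le_of_lt (ENNReal.tsum_le_tsum fun n => ?_) hsum
    rcases (u n).eq_empty_or_nonempty with h | h
    · simp [h, ENNReal.zero_rpow_of_pos hd]
    · simp [h]
  obtain ⟨η, hη, hηsum⟩ := ENNReal.exists_pos_sum_of_countable' hε2 ℕ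
  choose v hvo huv hvr hvd using fun n =>
    exists_isOpen_superset_ediam_rpow_lt hd ((hu n).trans_lt hρr) (hη n).ne'
  refine ⟨v, hvo, hsu.trans (iUnion_mono huv), hvr, ?_⟩
  calc ∑' n, ediam (v n) ^ d ≤ ∑' n, (ediam (u n) ^ d + η n) :=
        ENNReal.tsum_le_tsum fun n => (hvd n).le
    _ = ∑' n, ediam (u n) ^ d + ∑' n, η n := ENNReal.tsum_add
    _ < ε / 2 + ε / 2 := ENNReal.add_lt_add hsum' hηsum
    _ = ε := ENNReal.add_halves ε

lemma exists_isGδ_superset_hausdorffMeasure_eq_zero [MeasurableSpace X] [BorelSpace X] {d : ℝ}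
    (hd : 0 < d) {s : Set X} (hs : μH[d] s = 0) : ∃ G, IsGδ G ∧ s ⊆ G ∧ μH[d] G = 0 := by
  set r : ℕ → ℝ≥0∞ := fun k => ((k + 1 : ℕ) : ℝ≥0∞)⁻¹
  have hr : ∀ k, 0 < r k := fun k => ENNReal.inv_pos.2 (ENNReal.natCast_ne_top _)
  have hr0 : Tendsto r atTop (𝓝 0) :=
    ENNReal.tendsto_inv_nat_nhds_zero.comp (tendsto_add_atTop_nat 1)
  choose v hvo hsv hvr hvsum using fun k =>
    exists_isOpen_cover_tsum_ediam_rpow_lt hd hs (hr k) (hr k).ne'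
  refine ⟨⋂ k, ⋃ n, v k n, IsGδ.iInter fun k => (isOpen_iUnion (hvo k)).isGδ,
    subset_iInter hsv, le_antisymm ?_ zero_le⟩
  calc μH[d] (⋂ k, ⋃ n, v k n)
      ≤ liminf (fun k => ∑' n, ediam (v k n) ^ d) atTop :=
        hausdorffMeasure_le_liminf_tsum d _ r hr0 v
          (Eventually.of_forall fun k n => (hvr k n).le)
          (Eventually.of_forall fun k => iInter_subset _ k)
    _ ≤ liminf r atTop := liminf_le_liminf (Eventually.of_forall fun k => (hvsum k).le)
    _ = 0 := hr0.liminf_eq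

lemma exists_isGδ_superset_dimH_eq (s : Set X) : ∃ G, IsGδ G ∧ s ⊆ G ∧ dimH G = dimH s := by
  borelize X
  rcases eq_or_ne (dimH s) ∞ with htop | hfin
  · exact ⟨univ, IsGδ.univ, subset_univ s, le_antisymm (le_top.trans_eq htop.symm)
      (dimH_mono (subset_univ s))⟩
  obtain ⟨d, -, hsd, hd⟩ := exists_seq_strictAnti_tendsto (dimH s).toNNReal
  have hsd' : ∀ k, dimH s < d k := fun k => by
    simpa [ENNReal.coe_toNNReal hfin] using ENNReal.coe_lt_coe.2 (hsd k)
  choose G hG hsG hG0 using fun k =>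
    exists_isGδ_superset_hausdorffMeasure_eq_zero (NNReal.coe_pos.2 (zero_le.trans_lt (hsd k)))
      (hausdorffMeasure_of_dimH_lt (hsd' k))
  refine ⟨⋂ k, G k, IsGδ.iInter hG, subset_iInter hsG,
    le_antisymm ?_ (dimH_mono (subset_iInter hsG))⟩
  have hle : ∀ k, dimH (⋂ k, G k) ≤ d k := fun k =>
    dimH_le_of_hausdorffMeasure_ne_top <| ne_top_of_le_ne_top ENNReal.zero_ne_top <|
      (measure_mono (iInter_subset G k)).trans (hG0 k).le
  have hd' : Tendsto (fun k => (d k : ℝ≥0∞)) atTop (𝓝 (dimH s)) := by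
    simpa [ENNReal.coe_toNNReal hfin] using ENNReal.tendsto_coe.2 hd
  exact ge_of_tendsto' hd' hle

end HausdorffHull

theorem IsGδ.setOfPred_mapsTo {α β γ : Type*} [TopologicalSpace α] [TopologicalSpace β]
    [TopologicalSpace γ] {f : β → α → γ} (hf : Continuous (Function.uncurry f)) {K : Set α}
    (hK : IsCompact K) {G : Set γ} (hG : IsGδ G) : IsGδ {b | MapsTo (f b) K G} := by
  obtain ⟨T, hTo, hTc, rfl⟩ := hG
  let F : β → C(α, γ) := fun b => ⟨f b, hf.comp (Continuous.prodMk_right b)⟩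
  have hF : Continuous F := ContinuousMap.continuous_of_continuous_uncurry F hf
  have hset : {b | MapsTo (f b) K (⋂₀ T)} = ⋂ t ∈ T, F ⁻¹' {g | MapsTo g K t} := by
    ext b
    simp only [mem_ofPred_eq, mapsTo_sInter, mem_iInter, mem_preimage]
    rfl
  rw [hset]
  exact IsGδ.biInter_of_isOpen hTc fun t ht =>
    (ContinuousMap.isOpen_setOfPred_mapsTo hK (hTo t ht)).preimage hF

lemma AffineMap.lineMap_surjective_of_ne {x y : ℝ} (h : x ≠ y) :
    Function.Surjective (AffineMap.lineMap x y : ℝ → ℝ) := fun t => by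
  refine ⟨(t - x) / (y - x), ?_⟩
  have hyx : y - x ≠ 0 := sub_ne_zero.2 h.symm
  simp only [AffineMap.lineMap_apply_ring']
  field_simp
  ring

lemma exists_rat_Icc_subset_uIcc {x y : ℝ} (h : x ≠ y) :
    ∃ q : ℚ × ℚ, (q.1 : ℝ) < q.2 ∧ Icc (q.1 : ℝ) q.2 ⊆ uIcc x y := by
  obtain ⟨q₁, hxq₁, hq₁y⟩ := exists_rat_btwn (min_lt_max.2 h)
  obtain ⟨q₂, hq₁q₂, hq₂y⟩ := exists_rat_btwn hq₁y
  exact ⟨(q₁, q₂), hq₁q₂, Icc_subset_Icc hxq₁.le hq₂y.le⟩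

section Lines

variable {E : Type*} [AddCommGroup E] [Module ℝ E]

def lineNVMap (a b : E) : ℝ →ᵃ[ℝ] ℝ × E := AffineMap.lineMap (0, b) (1, a + b)

@[simp]
lemma lineNVMap_apply (a b : E) (t : ℝ) : lineNVMap a b t = (t, t • a + b) := by
  simp [lineNVMap, AffineMap.lineMap_apply_module', add_comm]

lemma range_lineMap_lineNVMap (a b : E) {x y : ℝ} (h : x ≠ y) :
    range (AffineMap.lineMap (lineNVMap a b x) (lineNVMap a b y) : ℝ → ℝ × E) =
      range (lineNVMap a b) := by
  have hcomp : (AffineMap.lineMap (lineNVMap a b x) (lineNVMap a b y) : ℝ → ℝ × E) =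
      lineNVMap a b ∘ AffineMap.lineMap x y :=
    funext fun c => (AffineMap.apply_lineMap _ _ _ _).symm
  rw [hcomp, (AffineMap.lineMap_surjective_of_ne h).range_comp]

lemma segment_lineNVMap (a b : E) (x y : ℝ) :
    segment ℝ (lineNVMap a b x) (lineNVMap a b y) = lineNVMap a b '' uIcc x y := by
  rw [← segment_eq_uIcc, image_segment]

end Lines

section Euclidean

variable {m : ℕ}

local notation "E" => EuclideanSpace ℝ (Fin m)

lemma range_lineNVMap (a b : E) : range (lineNVMap a b) = lineNV a b := by
  ext z
  simp [lineNV, eq_comm]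

lemma eq_lineNVMap_of_range_lineMap_eq {a b : E} {P Q : ℝ × E}
    (h : range (AffineMap.lineMap P Q : ℝ → ℝ × E) = lineNV a b) :
    P = lineNVMap a b P.1 ∧ Q = lineNVMap a b Q.1 := by
  have hP : P ∈ lineNV a b := h ▸ ⟨0, AffineMap.lineMap_apply_zero P Q⟩
  have hQ : Q ∈ lineNV a b := h ▸ ⟨1, AffineMap.lineMap_apply_one P Q⟩
  obtain ⟨s, rfl⟩ := hP
  obtain ⟨t, rfl⟩ := hQ
  simp

def nonverticalSegmentsIn (G : Set (ℝ × E)) : Set ((ℝ × E) × (ℝ × E)) :=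
  {p | p.1.1 ≠ p.2.1 ∧ segment ℝ p.1 p.2 ⊆ G}

def extendingLineParams (S : Set ((ℝ × E) × (ℝ × E))) : Set (E × E) :=
  {ab | ∃ p ∈ S, range (AffineMap.lineMap p.1 p.2 : ℝ →ᵃ[ℝ] ℝ × E) = lineNV ab.1 ab.2}

lemma extendingLineParams_nonverticalSegmentsIn (G : Set (ℝ × E)) :
    extendingLineParams (nonverticalSegmentsIn G) =
      ⋃ q ∈ {q : ℚ × ℚ | (q.1 : ℝ) < q.2}, {ab | MapsTo (lineNVMap ab.1 ab.2) (Icc q.1 q.2) G} := by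
  ext ⟨a, b⟩
  simp only [extendingLineParams, nonverticalSegmentsIn, mem_ofPred_eq, mem_iUnion, exists_prop]
  constructor
  · rintro ⟨⟨P, Q⟩, ⟨hne, hseg⟩, hline⟩
    obtain ⟨hP, hQ⟩ := eq_lineNVMap_of_range_lineMap_eq hline
    obtain ⟨q, hq, hsub⟩ := exists_rat_Icc_subset_uIcc hne
    refine ⟨q, hq, fun t ht => hseg ?_⟩
    rw [hP, hQ, segment_lineNVMap]
    exact mem_image_of_mem _ (hsub ht)
  · rintro ⟨q, hq, hmaps⟩
    refine ⟨(lineNVMap a b q.1, lineNVMap a b q.2), ⟨by simpa using hq.ne, ?_⟩, ?_⟩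
    · rw [segment_lineNVMap, uIcc_of_le hq.le]
      exact hmaps.image_subset
    · rw [range_lineMap_lineNVMap a b hq.ne, range_lineNVMap]

lemma measurableSet_extendingLineParams_nonverticalSegmentsIn {G : Set (ℝ × E)} (hG : IsGδ G) :
    MeasurableSet (extendingLineParams (nonverticalSegmentsIn G)) := by
  have hcont : Continuous (Function.uncurry fun ab : E × E => ⇑(lineNVMap ab.1 ab.2)) := by
    simp only [Function.uncurry_def, lineNVMap_apply]
    fun_prop
  rw [extendingLineParams_nonverticalSegmentsIn]
  exact MeasurableSet.biUnion (to_countable _) fun q _ =>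
    (IsGδ.setOfPred_mapsTo hcont isCompact_Icc hG).measurableSet

end Euclidean

theorem exists_superfamily_with_borel_lines_general
    (m : ℕ)
    (S : Set ((ℝ × EuclideanSpace ℝ (Fin m)) × (ℝ × EuclideanSpace ℝ (Fin m))))
    (hSnv : ∀ p ∈ S, p.1.1 ≠ p.2.1) :
    ∃ S' : Set ((ℝ × EuclideanSpace ℝ (Fin m)) × (ℝ × EuclideanSpace ℝ (Fin m))),
      S ⊆ S' ∧ (∀ p ∈ S', p.1.1 ≠ p.2.1) ∧
      dimH (⋃ p ∈ S', segment ℝ p.1 p.2) = dimH (⋃ p ∈ S, segment ℝ p.1 p.2) ∧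
      MeasurableSet {ab : EuclideanSpace ℝ (Fin m) × EuclideanSpace ℝ (Fin m) |
        ∃ p ∈ S',
          Set.range (AffineMap.lineMap p.1 p.2 : ℝ →ᵃ[ℝ] ℝ × EuclideanSpace ℝ (Fin m)) =
            lineNV ab.1 ab.2} := by
  obtain ⟨G, hG, hSG, hdimG⟩ := exists_isGδ_superset_dimH_eq (⋃ p ∈ S, segment ℝ p.1 p.2)
  have hSS' : S ⊆ nonverticalSegmentsIn G := fun p hp =>
    ⟨hSnv p hp, fun z hz => hSG (mem_biUnion hp hz)⟩
  refine ⟨nonverticalSegmentsIn G, hSS', fun p hp => hp.1, le_antisymm ?_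
    (dimH_mono (biUnion_subset_biUnion_left hSS')),
    measurableSet_extendingLineParams_nonverticalSegmentsIn hG⟩
  calc dimH (⋃ p ∈ nonverticalSegmentsIn G, segment ℝ p.1 p.2) ≤ dimH G :=
        dimH_mono (iUnion₂_subset fun p hp => hp.2)
    _ = dimH (⋃ p ∈ S, segment ℝ p.1 p.2) := hdimG

/-- For any collection `S` of closed nonvertical line segments in `ℝⁿ = ℝ × ℝ^{n-1}`,
each contained in a fixed bounded open set and of length at least `δ > 0`, there is a
larger collection `S' ⊇ S` of closed nonvertical line segments whose union has the same
Hausdorff dimension as that of `S`, and such that the set of parameters `(a,b)` of the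
lines extending the segments of `S'` is Borel. -/
theorem exists_superfamily_with_borel_lines
    (m : ℕ) (hm : 1 ≤ m)
    (U : Set (ℝ × EuclideanSpace ℝ (Fin m))) (hUo : IsOpen U) (hUb : Bornology.IsBounded U)
    (δ : ℝ) (hδ : 0 < δ)
    (S : Set ((ℝ × EuclideanSpace ℝ (Fin m)) × (ℝ × EuclideanSpace ℝ (Fin m))))
    (hSlen : ∀ p ∈ S, δ ≤ dist p.1 p.2)
    (hSU : ∀ p ∈ S, segment ℝ p.1 p.2 ⊆ U)
    (hSnv : ∀ p ∈ S, p.1.1 ≠ p.2.1) :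
    ∃ S' : Set ((ℝ × EuclideanSpace ℝ (Fin m)) × (ℝ × EuclideanSpace ℝ (Fin m))),
      S ⊆ S' ∧ (∀ p ∈ S', p.1.1 ≠ p.2.1) ∧
      dimH (⋃ p ∈ S', segment ℝ p.1 p.2) = dimH (⋃ p ∈ S, segment ℝ p.1 p.2) ∧
      MeasurableSet {ab : EuclideanSpace ℝ (Fin m) × EuclideanSpace ℝ (Fin m) |
        ∃ p ∈ S',
          Set.range (AffineMap.lineMap p.1 p.2 : ℝ →ᵃ[ℝ] ℝ × EuclideanSpace ℝ (Fin m)) =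
            lineNV ab.1 ab.2} :=
  exists_superfamily_with_borel_lines_general m S hSnv
end

section
/- The Line Segment Extension Conjecture in ℝⁿ (if A is a union of line segments and B the union of the corresponding lines, then hdim A = hdim B) implies that every Besicovitch set in ℝⁿ has Hausdorff dimension at least n − 1. -/
/-!
Take a functional `φ` and `e₀` with `φ e₀ = 1`, and let `P` be the projective map
`(x, y) ↦ (1/x, y/x)`, where `x = φ v`. On `{φ ≠ 0}`, `P` is a locally Lipschitz involution
mapping segments onto segments, and it sends a line with direction `o + e₀` (`φ o = 0`) into a
line through `o`. For each `o` in the hyperplane `H = {φ = 0}`, take a piece of the unit segment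
of `K` in direction `o + e₀` that avoids `H`: its image under `P` is a segment in `P '' K` whose
extension passes through `o`. The extension conjecture then gives
`n - 1 = dim H ≤ dim (P '' K) ≤ dim K`.
-/

open Set Module
open scoped ENNReal

namespace Besicovitch

variable {E : Type*} [NormedAddCommGroup E] [NormedSpace ℝ E]

theorem exists_subinterval_mul_pos (α : ℝ) {β : ℝ} (hβ : 0 < β) :
    ∃ t₁ t₂, 0 ≤ t₁ ∧ t₁ < t₂ ∧ t₂ ≤ 1 ∧ 0 < (α + t₁ * β) * (α + t₂ * β) := by
  by_cases h : 0 ≤ α + β / 2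
  · exact ⟨3 / 4, 1, by norm_num, by norm_num, le_rfl, by nlinarith⟩
  · exact ⟨0, 1 / 2, le_rfl, by norm_num, by norm_num, by nlinarith⟩

theorem dimH_submodule [FiniteDimensional ℝ E] (S : Submodule ℝ E) :
    dimH (S : Set E) = finrank ℝ S := by
  rw [show (S : Set E) = ((↑) : S → E) '' univ by simp, isometry_subtype_coe.dimH_image,
    Real.dimH_univ_eq_finrank]

/-- Writing `v = x • e₀ + y` with `φ y = 0` (when `φ e₀ = 1`), this is `(x, y) ↦ (1/x, y/x)`. -/
noncomputable def projectiveSwap (φ : StrongDual ℝ E) (e₀ v : E) : E :=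
  (φ v)⁻¹ • (v + (1 - φ v) • e₀)

section

variable {φ : StrongDual ℝ E} {e₀ : E}

local notation "P" => projectiveSwap φ e₀

theorem apply_projectiveSwap (hφ : φ e₀ = 1) (v : E) : φ (P v) = (φ v)⁻¹ := by
  simp only [projectiveSwap, map_smul, map_add, hφ, smul_eq_mul]
  ring

theorem projectiveSwap_projectiveSwap (hφ : φ e₀ = 1) {v : E} (hv : φ v ≠ 0) : P (P v) = v := by
  rw [projectiveSwap, apply_projectiveSwap hφ, inv_inv, projectiveSwap]
  match_scalars <;> field_simp
  ring

theorem projectiveSwap_eq_add_smul (o : E) {v : E} (hv : φ v ≠ 0) :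
    P v = o + (φ v)⁻¹ • (v - φ v • (o + e₀) + e₀) := by
  simp only [projectiveSwap]
  match_scalars <;> field_simp <;> ring

theorem mul_apply_pos_of_mem_segment {p q z : E} (h : 0 < φ p * φ q) (hz : z ∈ segment ℝ p q) :
    0 < φ p * φ z := by
  obtain ⟨a, b, ha, hb, hab, rfl⟩ := hz
  simp only [map_add, map_smul, smul_eq_mul]
  rcases ha.eq_or_lt with rfl | ha
  · obtain rfl : b = 1 := by linarith
    simpa using h
  · nlinarith [mul_pos ha (mul_self_pos.2 (left_ne_zero_of_mul h.ne')), mul_nonneg hb h.le]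

theorem projectiveSwap_image_segment_subset {p q : E} (h : 0 < φ p * φ q) :
    P '' segment ℝ p q ⊆ segment ℝ (P p) (P q) := by
  rintro _ ⟨z, hz, rfl⟩
  have hpz : 0 < φ p / φ z := div_pos_iff.2 (mul_pos_iff.1 (mul_apply_pos_of_mem_segment h hz))
  have hqz : 0 < φ q / φ z := div_pos_iff.2 (mul_pos_iff.1
    (mul_apply_pos_of_mem_segment (by rwa [mul_comm]) (segment_symm ℝ p q ▸ hz)))
  obtain ⟨a, b, ha, hb, hab, rfl⟩ := hz
  obtain rfl : b = 1 - a := by linarith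
  have hz0 : φ (a • p + (1 - a) • q) ≠ 0 := fun h0 => by simp [h0] at hpz
  refine ⟨a * (φ p / φ (a • p + (1 - a) • q)), (1 - a) * (φ q / φ (a • p + (1 - a) • q)),
    by positivity, by positivity, ?_, ?_⟩
  · rw [← mul_div_assoc, ← mul_div_assoc, ← add_div, div_eq_one_iff_eq hz0]
    simp
  · have hp : φ p ≠ 0 := left_ne_zero_of_mul h.ne'
    have hq : φ q ≠ 0 := right_ne_zero_of_mul h.ne'
    simp only [projectiveSwap, map_add, map_smul, smul_eq_mul]
    match_scalars <;> field_simp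
    ring

theorem segment_subset_projectiveSwap_image (hφ : φ e₀ = 1) {p q : E} (h : 0 < φ p * φ q) :
    segment ℝ (P p) (P q) ⊆ P '' segment ℝ p q := by
  have hp : φ p ≠ 0 := left_ne_zero_of_mul h.ne'
  have hq : φ q ≠ 0 := right_ne_zero_of_mul h.ne'
  have h' : 0 < φ (P p) * φ (P q) := by
    rw [apply_projectiveSwap hφ, apply_projectiveSwap hφ, ← mul_inv]
    exact inv_pos.2 h
  intro z hz
  refine ⟨P z, ?_, projectiveSwap_projectiveSwap hφ ?_⟩
  · simpa only [projectiveSwap_projectiveSwap hφ hp, projectiveSwap_projectiveSwap hφ hq] using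
      projectiveSwap_image_segment_subset h' (mem_image_of_mem P hz)
  · exact right_ne_zero_of_mul (mul_apply_pos_of_mem_segment h' hz).ne'

theorem mem_range_lineMap_projectiveSwap (hφ : φ e₀ = 1) {o p : E} (ho : φ o = 0) {r : ℝ}
    (hr : r ≠ 0) (hp : φ p ≠ 0) (hq : φ (p + r • (o + e₀)) ≠ 0) :
    o ∈ range (AffineMap.lineMap (P p) (P (p + r • (o + e₀))) : ℝ → E) := by
  set q := p + r • (o + e₀)
  have hφq : φ q = φ p + r := by simp [q, ho, hφ]
  have hw : q - φ q • (o + e₀) + e₀ = p - φ p • (o + e₀) + e₀ := by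
    rw [hφq]; module
  have hpq : φ q - φ p ≠ 0 := by rwa [hφq, add_sub_cancel_left]
  refine ⟨(φ p)⁻¹ / ((φ p)⁻¹ - (φ q)⁻¹), ?_⟩
  rw [AffineMap.lineMap_apply_module, projectiveSwap_eq_add_smul o hp,
    projectiveSwap_eq_add_smul o hq, hw]
  match_scalars <;> field_simp <;> ring

theorem dimH_image_projectiveSwap_le [FiniteDimensional ℝ E] {A : Set E}
    (hA : A ⊆ {v | φ v ≠ 0}) : dimH (P '' A) ≤ dimH A := by
  have hsmooth : ContDiffOn ℝ 1 P {v | φ v ≠ 0} :=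
    (φ.contDiff.contDiffOn.inv fun v hv => hv).smul
      (contDiff_id.add ((contDiff_const.sub φ.contDiff).smul contDiff_const)).contDiffOn
  have hsplit : A = (A ∩ {v | 0 < φ v}) ∪ (A ∩ {v | φ v < 0}) := by
    rw [← inter_union_distrib_left]
    exact (inter_eq_left.2 fun v hv => (hA hv).lt_or_gt.symm).symm
  rw [hsplit, image_union, dimH_union, dimH_union]
  refine max_le_max ?_ ?_
  · exact (hsmooth.mono fun v hv => hv.ne').dimH_image_le
      (convex_halfSpace_gt φ.isLinear 0) inter_subset_right
  · exact (hsmooth.mono fun v hv => hv.ne).dimH_image_le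
      (convex_halfSpace_lt φ.isLinear 0) inter_subset_right

theorem exists_segment_projectiveSwap_image (hφ : φ e₀ = 1) {K : Set E} {o x : E}
    (ho : φ o = 0) {c : ℝ} (hc : 0 < c) (hx : ∀ t ∈ Icc (0 : ℝ) 1, x + t • c • (o + e₀) ∈ K) :
    ∃ p q : E, P p ≠ P q ∧ segment ℝ (P p) (P q) ⊆ P '' (K ∩ {v | φ v ≠ 0}) ∧
      o ∈ range (AffineMap.lineMap (P p) (P q) : ℝ → E) := by
  obtain ⟨t₁, t₂, ht₁, ht₁₂, ht₂, hpos⟩ := exists_subinterval_mul_pos (φ x) hc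
  have hφ_along (t : ℝ) : φ (x + t • c • (o + e₀)) = φ x + t * c := by simp [ho, hφ]
  set p := x + t₁ • c • (o + e₀)
  have hq : x + t₂ • c • (o + e₀) = p + ((t₂ - t₁) * c) • (o + e₀) := by module
  have hpq : 0 < φ p * φ (x + t₂ • c • (o + e₀)) := by rwa [hφ_along, hφ_along]
  have hK : segment ℝ x (x + c • (o + e₀)) ⊆ K := by
    rw [segment_eq_image']
    rintro _ ⟨t, ht, rfl⟩
    simpa using hx t ht
  have hmem (t : ℝ) (ht : t ∈ Icc (0 : ℝ) 1) :
      x + t • c • (o + e₀) ∈ segment ℝ x (x + c • (o + e₀)) := by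
    rw [segment_eq_image']
    exact ⟨t, ht, by simp⟩
  have hseg : segment ℝ p (x + t₂ • c • (o + e₀)) ⊆ K ∩ {v | φ v ≠ 0} := fun z hz =>
    ⟨hK ((convex_segment _ _).segment_subset (hmem t₁ ⟨ht₁, by linarith⟩)
      (hmem t₂ ⟨by linarith, ht₂⟩) hz),
      right_ne_zero_of_mul (mul_apply_pos_of_mem_segment hpq hz).ne'⟩
  refine ⟨p, _, ?_, (segment_subset_projectiveSwap_image hφ hpq).trans (image_mono hseg), ?_⟩
  · intro h
    have := congrArg φ h
    rw [apply_projectiveSwap hφ, apply_projectiveSwap hφ, inv_inj, hφ_along, hφ_along] at this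
    nlinarith
  · rw [hq]
    refine mem_range_lineMap_projectiveSwap hφ ho (by nlinarith) (left_ne_zero_of_mul hpq.ne') ?_
    rw [← hq]
    exact right_ne_zero_of_mul hpq.ne'

end

theorem finrank_sub_one_le_dimH [FiniteDimensional ℝ E]
    (hLSEC : ∀ S : Set (E × E), (∀ p ∈ S, p.1 ≠ p.2) →
      dimH (⋃ p ∈ S, range (AffineMap.lineMap p.1 p.2 : ℝ →ᵃ[ℝ] E)) ≤
        dimH (⋃ p ∈ S, segment ℝ p.1 p.2))
    {K : Set E} (hK : ∀ e : E, ‖e‖ = 1 → ∃ x, ∀ t ∈ Icc (0 : ℝ) 1, x + t • e ∈ K) :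
    (finrank ℝ E : ℝ≥0∞) - 1 ≤ dimH K := by
  rcases subsingleton_or_nontrivial E with hE | hE
  · simp [finrank_zero_of_subsingleton]
  obtain ⟨e₀, he₀⟩ := exists_ne (0 : E)
  obtain ⟨φ, hφ⟩ := SeparatingDual.exists_eq_one (R := ℝ) he₀
  have hd (o : LinearMap.ker (φ : E →ₗ[ℝ] ℝ)) : (o : E) + e₀ ≠ 0 := fun h => by
    simpa [hφ, LinearMap.mem_ker.1 o.2] using congrArg φ h
  choose x hx using fun o => hK _ (norm_smul_inv_norm (𝕜 := ℝ) (hd o))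
  choose p q hpq hseg hline using fun o =>
    exists_segment_projectiveSwap_image hφ o.2 (inv_pos.2 (norm_pos_iff.2 (hd o))) (hx o)
  set S := range fun o => (projectiveSwap φ e₀ (p o), projectiveSwap φ e₀ (q o))
  have hker : (finrank ℝ E : ℝ≥0∞) - 1 = dimH (LinearMap.ker (φ : E →ₗ[ℝ] ℝ) : Set E) := by
    have hφ0 : (φ : E →ₗ[ℝ] ℝ) ≠ 0 := fun h =>
      one_ne_zero (hφ.symm.trans (LinearMap.congr_fun h e₀))
    rw [dimH_submodule, ← Module.Dual.finrank_ker_add_one_of_ne_zero hφ0, Nat.cast_add,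
      Nat.cast_one, ENNReal.add_sub_cancel_right ENNReal.one_ne_top]
  calc (finrank ℝ E : ℝ≥0∞) - 1 = dimH (LinearMap.ker (φ : E →ₗ[ℝ] ℝ) : Set E) := hker
    _ ≤ dimH (⋃ s ∈ S, range (AffineMap.lineMap s.1 s.2 : ℝ →ᵃ[ℝ] E)) :=
      dimH_mono fun o ho => mem_iUnion₂.2 ⟨_, ⟨⟨o, ho⟩, rfl⟩, hline _⟩
    _ ≤ dimH (⋃ s ∈ S, segment ℝ s.1 s.2) := hLSEC S (by rintro _ ⟨o, rfl⟩; exact hpq o)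
    _ ≤ dimH (projectiveSwap φ e₀ '' (K ∩ {v | φ v ≠ 0})) :=
      dimH_mono (iUnion₂_subset (by rintro _ ⟨o, rfl⟩; exact hseg o))
    _ ≤ dimH (K ∩ {v | φ v ≠ 0}) := dimH_image_projectiveSwap_le inter_subset_right
    _ ≤ dimH K := dimH_mono inter_subset_left

end Besicovitch

open Besicovitch in
theorem besicovitch_dimH_ge_of_LSEC_general
    (n : ℕ)
    (LSEC : ∀ S : Set (EuclideanSpace ℝ (Fin n) × EuclideanSpace ℝ (Fin n)),
      (∀ p ∈ S, p.1 ≠ p.2) →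
      dimH (⋃ p ∈ S, segment ℝ p.1 p.2) =
        dimH (⋃ p ∈ S,
          Set.range (AffineMap.lineMap p.1 p.2 : ℝ →ᵃ[ℝ] EuclideanSpace ℝ (Fin n))))
    (K : Set (EuclideanSpace ℝ (Fin n)))
    (hBes : ∀ e : EuclideanSpace ℝ (Fin n), ‖e‖ = 1 →
      ∃ x, ∀ t ∈ Icc (0 : ℝ) 1, x + t • e ∈ K) :
    (n : ENNReal) - 1 ≤ dimH K := by
  simpa using finrank_sub_one_le_dimH (fun S hS => (LSEC S hS).ge) hBes

/-- The Line Segment Extension Conjecture in ℝⁿ (unions of line segments and of their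
full line extensions have the same Hausdorff dimension) implies that every Besicovitch
set in ℝⁿ (compact set containing a unit segment in every direction) has Hausdorff
dimension at least `n - 1`. -/
theorem besicovitch_dimH_ge_of_LSEC
    (n : ℕ) (hn : 2 ≤ n)
    (LSEC : ∀ S : Set (EuclideanSpace ℝ (Fin n) × EuclideanSpace ℝ (Fin n)),
      (∀ p ∈ S, p.1 ≠ p.2) →
      dimH (⋃ p ∈ S, segment ℝ p.1 p.2) =
        dimH (⋃ p ∈ S,
          Set.range (AffineMap.lineMap p.1 p.2 : ℝ →ᵃ[ℝ] EuclideanSpace ℝ (Fin n))))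
    (K : Set (EuclideanSpace ℝ (Fin n))) (hK : IsCompact K)
    (hBes : ∀ e : EuclideanSpace ℝ (Fin n), ‖e‖ = 1 →
      ∃ x, ∀ t ∈ Icc (0 : ℝ) 1, x + t • e ∈ K) :
    (n : ENNReal) - 1 ≤ dimH K :=
  besicovitch_dimH_ge_of_LSEC_general n LSEC K hBes
end

section
/- There exists a countable family of line segments in ℝ³ whose union A has Hausdorff dimension 1, and a family of rectifiable curves, each a countable concatenation of these segments, such that adding to each curve its single limit point yields a set containing [0,1] × [0,1] × {0}, which has Hausdorff dimension 2. Hence extending rectifiable curves by their endpoint limit points can raise Hausdorff dimension from 1 to at least 2. -/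
/-!
For `x ∈ ℝ²` let `quadtreeVertex x n` be the corner of the level-`n` dyadic square containing `x`,
lifted to height `2⁻ⁿ`. Consecutive vertices are `2⁻ⁿ`-close, so the polygonal path through them,
which spends time `1/((n+1)(n+2))` on its `n`-th edge, is still Lipschitz, hence rectifiable, and it
converges to `(x, 0)`. Every such path lies in the countably many segments joining dyadic points of
consecutive levels, a set of Hausdorff dimension `1`, while the limit points fill the plane `z = 0`.
-/

open Set Filter

open scoped NNReal Topology

noncomputable section

theorem LipschitzWith.tsum {α ι E : Type*} [PseudoMetricSpace α] [NormedAddCommGroup E]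
    {f : ι → α → E} {K : ι → ℝ≥0} (hf : ∀ i, LipschitzWith (K i) (f i)) (hK : Summable K)
    (hs : ∀ x, Summable fun i => f i x) : LipschitzWith (∑' i, K i) fun x => ∑' i, f i x := by
  refine LipschitzWith.of_dist_le_mul fun x y => ?_
  rw [dist_eq_norm, ← (hs x).tsum_sub (hs y)]
  exact tsum_of_norm_bounded ((NNReal.hasSum_coe.2 hK.hasSum).mul_right _) fun i =>
    (dist_eq_norm _ _).symm.trans_le ((hf i).dist_le_mul x y)

theorem LipschitzWith.smul_const {α E : Type*} [PseudoMetricSpace α] [NormedAddCommGroup E]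
    [NormedSpace ℝ E] {f : α → ℝ} {K : ℝ≥0} (hf : LipschitzWith K f) (v : E) :
    LipschitzWith (K * ‖v‖₊) fun x => f x • v := by
  refine LipschitzWith.of_dist_le_mul fun x y => ?_
  rw [dist_eq_norm, ← sub_smul, norm_smul, ← dist_eq_norm, NNReal.coe_mul, coe_nnnorm,
    mul_right_comm]
  exact mul_le_mul_of_nonneg_right (hf.dist_le_mul x y) (norm_nonneg v)

/-- `ramp n` rises linearly from `0` to `1` on `[n/(n+1), (n+1)/(n+2)]`. -/
def ramp (n : ℕ) (t : ℝ) : ℝ := max 0 (min 1 ((n + 2) * ((n + 1) * t - n)))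

lemma ramp_mem_Icc (n : ℕ) (t : ℝ) : ramp n t ∈ Icc 0 1 :=
  ⟨le_max_left _ _, max_le zero_le_one (min_le_left _ _)⟩

lemma lipschitzWith_ramp (n : ℕ) : LipschitzWith ((n + 1) * (n + 2)) (ramp n) := by
  refine ((LipschitzWith.of_dist_le_mul fun a b => ?_).const_min 1).const_max 0
  rw [Real.dist_eq, Real.dist_eq, show (n + 2) * ((n + 1) * a - n) - (n + 2) * ((n + 1) * b - n)
    = ((n + 1) * (n + 2) : ℝ) * (a - b) by ring, abs_mul, abs_of_pos (by positivity)]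
  push_cast; rfl

lemma ramp_eq_one {n N : ℕ} {t : ℝ} (hN : N ≤ (N + 1) * t) (hn : n < N) : ramp n t = 1 := by
  have hn' : (n : ℝ) + 1 ≤ N := by exact_mod_cast hn
  have ht : (n : ℝ) + 1 ≤ (n + 2) * t :=
    le_of_mul_le_mul_right (a := (N : ℝ) + 1) (by nlinarith) (by positivity)
  have : 1 ≤ (n + 2) * ((n + 1) * t - n) := by nlinarith
  rw [ramp, min_eq_left this, max_eq_right zero_le_one]

lemma ramp_eq_zero {n N : ℕ} {t : ℝ} (hN : (N + 2) * t ≤ N + 1) (hn : N < n) : ramp n t = 0 := by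
  have hn' : (N : ℝ) + 1 ≤ n := by exact_mod_cast hn
  have ht : (n + 1) * t ≤ n :=
    le_of_mul_le_mul_right (a := (N : ℝ) + 2) (by nlinarith) (by positivity)
  have : (n + 2) * ((n + 1) * t - n) ≤ 0 := by nlinarith
  rw [ramp, max_eq_left (min_le_of_right_le this)]

lemma ramp_one (n : ℕ) : ramp n 1 = 1 :=
  ramp_eq_one (N := n + 1) (by push_cast; linarith) n.lt_succ_self

lemma exists_nat_le_mul_and_mul_le {t : ℝ} (ht : t ∈ Ico 0 1) :
    ∃ N : ℕ, N ≤ (N + 1) * t ∧ (N + 2) * t ≤ N + 1 := by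
  obtain ⟨ht₀, ht₁⟩ := ht
  have hpos : 0 < 1 - t := sub_pos.2 ht₁
  refine ⟨⌊t / (1 - t)⌋₊, ?_, ?_⟩
  · have := Nat.floor_le (div_nonneg ht₀ hpos.le)
    rw [le_div_iff₀ hpos] at this
    linarith
  · have := Nat.lt_floor_add_one (t / (1 - t))
    rw [div_lt_iff₀ hpos] at this
    linarith

section PolygonalPath

variable {E : Type*} [NormedAddCommGroup E] {p : ℕ → E}

lemma summable_norm_sub_of_summable_mul
    (h : Summable fun n : ℕ => ((n : ℝ) + 1) * (n + 2) * ‖p (n + 1) - p n‖) :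
    Summable fun n => ‖p (n + 1) - p n‖ :=
  h.of_nonneg_of_le (fun _ => norm_nonneg _) fun n =>
    le_mul_of_one_le_left (norm_nonneg _) (by nlinarith [n.cast_nonneg (α := ℝ)])

variable [NormedSpace ℝ E]

def polygonalPath (p : ℕ → E) (t : ℝ) : E := p 0 + ∑' n, ramp n t • (p (n + 1) - p n)

lemma polygonalPath_eq_lineMap {N : ℕ} {t : ℝ} (h₁ : N ≤ (N + 1) * t)
    (h₂ : (N + 2) * t ≤ N + 1) :
    polygonalPath p t = AffineMap.lineMap (p N) (p (N + 1)) (ramp N t) := by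
  have htail : ∀ n ∉ Finset.range (N + 1), ramp n t • (p (n + 1) - p n) = 0 := fun n hn => by
    rw [ramp_eq_zero h₂ (by simpa [Nat.lt_succ_iff] using hn), zero_smul]
  have hinit : ∀ n ∈ Finset.range N, ramp n t • (p (n + 1) - p n) = p (n + 1) - p n :=
    fun n hn => by rw [ramp_eq_one h₁ (Finset.mem_range.1 hn), one_smul]
  rw [polygonalPath, tsum_eq_sum htail, Finset.sum_range_succ, Finset.sum_congr rfl hinit,
    Finset.sum_range_sub, AffineMap.lineMap_apply_module']
  abel

lemma exists_polygonalPath_mem_segment {t : ℝ} (ht : t ∈ Ico 0 1) :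
    ∃ N, polygonalPath p t ∈ segment ℝ (p N) (p (N + 1)) := by
  obtain ⟨N, h₁, h₂⟩ := exists_nat_le_mul_and_mul_le ht
  refine ⟨N, ?_⟩
  rw [polygonalPath_eq_lineMap h₁ h₂]
  exact lineMap_mem_segment ℝ _ _ (ramp_mem_Icc N t)

variable [CompleteSpace E]

lemma lipschitzWith_polygonalPath
    (h : Summable fun n : ℕ => ((n : ℝ) + 1) * (n + 2) * ‖p (n + 1) - p n‖) :
    ∃ K, LipschitzWith K (polygonalPath p) := by
  have hK : Summable fun n : ℕ => ((n + 1) * (n + 2) * ‖p (n + 1) - p n‖₊ : ℝ≥0) := by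
    rw [← NNReal.summable_coe]; push_cast; exact h
  have hs (t : ℝ) : Summable fun n => ramp n t • (p (n + 1) - p n) :=
    (summable_norm_sub_of_summable_mul h).of_norm_bounded fun n => by
      rw [norm_smul, Real.norm_of_nonneg (ramp_mem_Icc n t).1]
      exact mul_le_of_le_one_left (norm_nonneg _) (ramp_mem_Icc n t).2
  exact ⟨_, (LipschitzWith.const _).add
    (LipschitzWith.tsum (fun n => (lipschitzWith_ramp n).smul_const _) hK hs)⟩

lemma polygonalPath_one {l : E} (hlim : Tendsto p atTop (𝓝 l))
    (h : Summable fun n : ℕ => ((n : ℝ) + 1) * (n + 2) * ‖p (n + 1) - p n‖) :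
    polygonalPath p 1 = l := by
  have hs := (summable_norm_sub_of_summable_mul h).of_norm
  have hsum : Tendsto (fun N => p N - p 0) atTop (𝓝 (∑' n, (p (n + 1) - p n))) := by
    simpa only [Finset.sum_range_sub] using hs.tendsto_sum_tsum_nat
  simp only [polygonalPath, ramp_one, one_smul]
  rw [tendsto_nhds_unique hsum (hlim.sub_const _)]
  abel

end PolygonalPath

def dyadicFloor (n : ℕ) (x : ℝ) : ℝ := ⌊2 ^ n * x⌋ / 2 ^ n

lemma dyadicFloor_le (n : ℕ) (x : ℝ) : dyadicFloor n x ≤ x := by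
  rw [dyadicFloor, div_le_iff₀ (by positivity), mul_comm]
  exact Int.floor_le _

lemma sub_lt_dyadicFloor (n : ℕ) (x : ℝ) : x - 2⁻¹ ^ n < dyadicFloor n x := by
  have := Int.lt_floor_add_one (2 ^ n * x)
  rw [dyadicFloor, lt_div_iff₀ (by positivity), sub_mul, inv_pow, inv_mul_cancel₀ (by positivity)]
  linarith

lemma tendsto_dyadicFloor (x : ℝ) : Tendsto (dyadicFloor · x) atTop (𝓝 x) := by
  have hpow := tendsto_pow_atTop_nhds_zero_of_lt_one (r := (2⁻¹ : ℝ)) (by norm_num) (by norm_num)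
  refine tendsto_of_tendsto_of_tendsto_of_le_of_le (by simpa using hpow.const_sub x)
    tendsto_const_nhds (fun n => (sub_lt_dyadicFloor n x).le) (dyadicFloor_le · x)

lemma abs_dyadicFloor_succ_sub_le (n : ℕ) (x : ℝ) :
    |dyadicFloor (n + 1) x - dyadicFloor n x| ≤ 2⁻¹ ^ n := by
  have hpow : (2⁻¹ : ℝ) ^ (n + 1) ≤ 2⁻¹ ^ n :=
    pow_le_pow_of_le_one (by norm_num) (by norm_num) n.le_succ
  rw [abs_le]
  constructor <;> linarith [sub_lt_dyadicFloor (n + 1) x, sub_lt_dyadicFloor n x,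
    dyadicFloor_le (n + 1) x, dyadicFloor_le n x]

def dyadicPoint (n : ℕ) (a : ℤ × ℤ) : ℝ × ℝ × ℝ := (a.1 / 2 ^ n, a.2 / 2 ^ n, 2⁻¹ ^ n)

def quadtreeVertex (x : ℝ × ℝ) (n : ℕ) : ℝ × ℝ × ℝ :=
  dyadicPoint n (⌊2 ^ n * x.1⌋, ⌊2 ^ n * x.2⌋)

lemma quadtreeVertex_eq (x : ℝ × ℝ) (n : ℕ) :
    quadtreeVertex x n = (dyadicFloor n x.1, dyadicFloor n x.2, 2⁻¹ ^ n) := rfl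

lemma tendsto_quadtreeVertex (x : ℝ × ℝ) :
    Tendsto (quadtreeVertex x) atTop (𝓝 (x.1, x.2, 0)) :=
  (tendsto_dyadicFloor x.1).prodMk_nhds ((tendsto_dyadicFloor x.2).prodMk_nhds
    (tendsto_pow_atTop_nhds_zero_of_lt_one (by norm_num) (by norm_num)))

lemma norm_quadtreeVertex_succ_sub_le (x : ℝ × ℝ) (n : ℕ) :
    ‖quadtreeVertex x (n + 1) - quadtreeVertex x n‖ ≤ 2⁻¹ ^ n := by
  have hz : |(2⁻¹ : ℝ) ^ (n + 1) - 2⁻¹ ^ n| ≤ 2⁻¹ ^ n := by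
    rw [pow_succ, abs_le]; constructor <;> nlinarith [pow_pos (by norm_num : (0 : ℝ) < 2⁻¹) n]
  simp only [quadtreeVertex_eq, Prod.mk_sub_mk, Prod.norm_mk, Real.norm_eq_abs]
  exact max_le (abs_dyadicFloor_succ_sub_le n x.1) (max_le (abs_dyadicFloor_succ_sub_le n x.2) hz)

lemma summable_mul_norm_quadtreeVertex_succ_sub (x : ℝ × ℝ) :
    Summable fun n : ℕ =>
      ((n : ℝ) + 1) * (n + 2) * ‖quadtreeVertex x (n + 1) - quadtreeVertex x n‖ := by
  have hgeom : Summable fun n : ℕ => ((n : ℝ) + 1) * (n + 2) * 2⁻¹ ^ n := by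
    refine (summable_descFactorial_mul_geometric_of_norm_lt_one (R := ℝ) 2
      (r := 2⁻¹) (by norm_num)).congr fun n => ?_
    simp [Nat.descFactorial]
  exact hgeom.of_nonneg_of_le (fun n => by positivity) fun n =>
    mul_le_mul_of_nonneg_left (norm_quadtreeVertex_succ_sub_le x n) (by positivity)

def dyadicEdge (e : ℕ × (ℤ × ℤ) × (ℤ × ℤ)) : (ℝ × ℝ × ℝ) × (ℝ × ℝ × ℝ) :=
  (dyadicPoint e.1 e.2.1, dyadicPoint (e.1 + 1) e.2.2)

lemma dyadicEdge_fst_ne_snd (e : ℕ × (ℤ × ℤ) × (ℤ × ℤ)) : (dyadicEdge e).1 ≠ (dyadicEdge e).2 :=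
  fun h => (pow_lt_pow_right_of_lt_one₀ (by norm_num) (by norm_num) e.1.lt_succ_self :
    (2⁻¹ : ℝ) ^ (e.1 + 1) < 2⁻¹ ^ e.1).ne' (congrArg (·.2.2) h)

def dyadicEdgeSeq (k : ℕ) : (ℝ × ℝ × ℝ) × (ℝ × ℝ × ℝ) :=
  dyadicEdge ((Denumerable.eqv (ℕ × (ℤ × ℤ) × (ℤ × ℤ))).symm k)

lemma segment_quadtreeVertex_subset (x : ℝ × ℝ) (n : ℕ) :
    segment ℝ (quadtreeVertex x n) (quadtreeVertex x (n + 1)) ⊆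
      ⋃ k, segment ℝ (dyadicEdgeSeq k).1 (dyadicEdgeSeq k).2 := fun _ hy =>
  mem_iUnion.2 ⟨Denumerable.eqv (ℕ × (ℤ × ℤ) × (ℤ × ℤ)) (n, (_, _), (_, _)), by
    rw [dyadicEdgeSeq, Equiv.symm_apply_apply]; exact hy⟩

lemma dimH_iUnion_segment {E ι : Type*} [NormedAddCommGroup E] [NormedSpace ℝ E]
    [FiniteDimensional ℝ E] [Countable ι] [Nonempty ι] {s : ι → E × E}
    (hs : ∀ i, (s i).1 ≠ (s i).2) :
    dimH (⋃ i, segment ℝ (s i).1 (s i).2) = 1 := by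
  simp only [dimH_iUnion, Real.dimH_segment (hs _), iSup_const]

lemma dimH_prod_prod_singleton {X Y Z : Type*} [EMetricSpace X] [EMetricSpace Y]
    [EMetricSpace Z] (s : Set X) (t : Set Y) (c : Z) : dimH (s ×ˢ t ×ˢ {c}) = dimH (s ×ˢ t) := by
  have hiso : Isometry fun q : X × Y => (q.1, q.2, c) := fun _ _ => by simp [Prod.edist_eq]
  rw [← hiso.dimH_image]
  congr 1
  ext ⟨a, b, z⟩
  simp [and_assoc, eq_comm]

lemma dimH_unit_square : dimH (Icc (0 : ℝ) 1 ×ˢ Icc (0 : ℝ) 1) = 2 := by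
  rw [Real.dimH_of_nonempty_interior (by rw [interior_prod_eq]; simp), Module.finrank_prod,
    Module.finrank_self]
  rfl

end

/-- There is a countable family of line segments in ℝ³ whose union `A` has Hausdorff
dimension `1`, together with a family of rectifiable curves contained in `A`, each
converging to a limit point, such that the set of limit points covers
`[0,1] × [0,1] × {0}`, a set of Hausdorff dimension `2`. Hence extending rectifiable
curves by their limit points can raise the Hausdorff dimension from `1` to `2`. -/
theorem curves_extension_raises_dimension :
    ∃ (s : ℕ → (ℝ × ℝ × ℝ) × (ℝ × ℝ × ℝ)) (ι : Type) (γ : ι → ℝ → ℝ × ℝ × ℝ)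
      (lim : ι → ℝ × ℝ × ℝ),
      (∀ k, (s k).1 ≠ (s k).2) ∧
      dimH (⋃ k, segment ℝ (s k).1 (s k).2) = 1 ∧
      (∀ i, ∀ t ∈ Ico (0 : ℝ) 1, γ i t ∈ ⋃ k, segment ℝ (s k).1 (s k).2) ∧
      (∀ i, ContinuousOn (γ i) (Ico (0 : ℝ) 1)) ∧
      (∀ i, eVariationOn (γ i) (Ico (0 : ℝ) 1) < ⊤) ∧
      (∀ i, Tendsto (γ i) (nhdsWithin 1 (Ico (0 : ℝ) 1)) (nhds (lim i))) ∧
      (Icc (0 : ℝ) 1 ×ˢ Icc (0 : ℝ) 1 ×ˢ {(0 : ℝ)}) ⊆ Set.range lim ∧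
      dimH ((Icc (0 : ℝ) 1 ×ˢ Icc (0 : ℝ) 1 ×ˢ {(0 : ℝ)}) : Set (ℝ × ℝ × ℝ)) = 2 := by
  have hs (k : ℕ) : (dyadicEdgeSeq k).1 ≠ (dyadicEdgeSeq k).2 := dyadicEdge_fst_ne_snd _
  choose K hK using fun x =>
    lipschitzWith_polygonalPath (summable_mul_norm_quadtreeVertex_succ_sub x)
  refine ⟨dyadicEdgeSeq, ℝ × ℝ, fun x => polygonalPath (quadtreeVertex x), fun x => (x.1, x.2, 0),
    hs, dimH_iUnion_segment hs, fun x t ht => ?_, fun x => (hK x).continuous.continuousOn,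
    fun x => ?_, fun x => ?_, ?_, by rw [dimH_prod_prod_singleton, dimH_unit_square]⟩
  · obtain ⟨N, hN⟩ := exists_polygonalPath_mem_segment (p := quadtreeVertex x) ht
    exact segment_quadtreeVertex_subset x N hN
  · have := (hK x).locallyBoundedVariationOn (Icc 0 1) 0 1 (by simp) (by simp)
    exact lt_of_le_of_lt (eVariationOn.mono _ (by simp [Ico_subset_Icc_self])) this.lt_top
  · have h := (hK x).continuous.continuousWithinAt (s := Ico 0 1) (x := 1)
    rwa [ContinuousWithinAt, polygonalPath_one (tendsto_quadtreeVertex x)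
      (summable_mul_norm_quadtreeVertex_succ_sub x)] at h
  · rintro ⟨a, b, z⟩ ⟨-, -, rfl⟩
    exact ⟨(a, b), rfl⟩
end
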